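/- If the multislice V_{N,k'} is a coarsening of V_{N,k} (i.e., k' = φ(k) for some surjection φ), then every eigenvalue of the graph Laplacian L_{N,k'} is also an eigenvalue of L_{N,k}. In particular, the spectral gap of L_{N,k'} is at least the spectral gap of L_{N,k}. -/

import Mathlib

open scoped Classical BigOperators

/-- The multislice: tuples `x : Fin N → Fin r` in which each value `m` is
attained exactly `k m` times. -/
def multislice (N r : ℕ) (k : Fin r → ℕ) : Finset (Fin N → Fin r) :=
  Finset.univ.filter fun x => ∀ m : Fin r,
    (Finset.univ.filter fun ℓ => x ℓ = m).card = k m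

/-- Adjacency by pair transpositions of coordinates. -/
def adjacent {N r : ℕ} (x y : Fin N → Fin r) : Prop :=
  x ≠ y ∧ ∃ i j : Fin N, i ≠ j ∧ y = x ∘ Equiv.swap i j

/-- The graph Laplacian on the multislice. -/
noncomputable def lap (N r : ℕ) (k : Fin r → ℕ) (f : (Fin N → Fin r) → ℝ)
    (x : Fin N → Fin r) : ℝ :=
  ∑ y ∈ (multislice N r k).filter (fun y => adjacent x y), (f x - f y)

/-- `lam` is an eigenvalue of the graph Laplacian on the multislice. -/
def IsLapEigenvalue (N r : ℕ) (k : Fin r → ℕ) (lam : ℝ) : Prop :=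
  ∃ f : (Fin N → Fin r) → ℝ, (∃ x ∈ multislice N r k, f x ≠ 0) ∧
    ∀ x ∈ multislice N r k, lap N r k f x = lam * f x

/-- The coarsened occupation vector `φ(k)`. -/
def coarse {s r : ℕ} (φ : Fin s → Fin r) (k : Fin s → ℕ) : Fin r → ℕ :=
  fun m => ∑ n ∈ Finset.univ.filter (fun n => φ n = m), k n

/-!
Pulling back along `x ↦ φ ∘ x` intertwines the two Laplacians: both are sums over the
transpositions `(i j)` with `i < j`, and a transposition that leaves `φ ∘ x` unchanged
contributes nothing upstairs either. Every point of the coarse multislice lifts (distribute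
the positions of each colour `m` among the colours of `φ⁻¹ m` with the prescribed
multiplicities), so the pullback of an eigenfunction is nonzero and is an eigenfunction for the
same eigenvalue. Eigenvalues are nonnegative by the maximum principle, which bounds the infima
from below.
-/

theorem comp_perm_mem_multislice {N r : ℕ} {k : Fin r → ℕ} {x : Fin N → Fin r}
    (hx : x ∈ multislice N r k) (σ : Equiv.Perm (Fin N)) :
    x ∘ σ ∈ multislice N r k := by
  simp only [multislice, Finset.mem_filter, Finset.mem_univ, true_and] at hx ⊢
  intro m
  rw [← hx m]
  exact Finset.card_equiv σ (by simp)

theorem comp_mem_multislice_coarse {N s r : ℕ} {k : Fin s → ℕ} (φ : Fin s → Fin r)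
    {x : Fin N → Fin s} (hx : x ∈ multislice N s k) :
    φ ∘ x ∈ multislice N r (coarse φ k) := by
  simp only [multislice, Finset.mem_filter, Finset.mem_univ, true_and] at hx ⊢
  intro m
  rw [Finset.card_eq_sum_card_fiberwise (f := x) (t := Finset.univ.filter (φ · = m))
    (fun ℓ hℓ => by simpa using hℓ)]
  refine Finset.sum_congr rfl fun n hn => ?_
  rw [← hx n, Finset.filter_filter]
  congr 1
  ext ℓ
  simp only [Finset.mem_filter, Finset.mem_univ, true_and] at hn ⊢
  grind

theorem card_filter_sigma_fst {s : ℕ} (k : Fin s → ℕ) (p : Fin s → Prop) [DecidablePred p] :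
    (Finset.univ.filter fun q : (Σ n, Fin (k n)) => p q.1).card
      = ∑ n ∈ Finset.univ.filter p, k n := by
  have : (Finset.univ.filter fun q : (Σ n, Fin (k n)) => p q.1)
      = (Finset.univ.filter p).sigma fun _ => Finset.univ := by
    ext q
    simp
  rw [this, Finset.card_sigma]
  simp

theorem exists_mem_multislice_comp_eq {N s r : ℕ} (φ : Fin s → Fin r) (k : Fin s → ℕ)
    {z : Fin N → Fin r} (hz : z ∈ multislice N r (coarse φ k)) :
    ∃ x ∈ multislice N s k, φ ∘ x = z := by
  simp only [multislice, Finset.mem_filter, Finset.mem_univ, true_and] at hz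
  have hfiber (m : Fin r) :
      { ℓ // z ℓ = m } ≃ { q : Σ n, Fin (k n) // φ q.1 = m } := by
    refine Fintype.equivOfCardEq ?_
    rw [Fintype.card_subtype, Fintype.card_subtype, hz m, card_filter_sigma_fst k (φ · = m)]
    rfl
  set e := Equiv.ofFiberEquiv hfiber
  refine ⟨fun ℓ => (e ℓ).1, ?_, funext (Equiv.ofFiberEquiv_map hfiber)⟩
  simp only [multislice, Finset.mem_filter, Finset.mem_univ, true_and]
  intro n
  rw [Finset.card_equiv e (t := Finset.univ.filter fun q : (Σ n, Fin (k n)) => q.1 = n) (by simp),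
    card_filter_sigma_fst k (· = n)]
  simp [Finset.filter_eq']

section Swap

variable {ι α : Type*} [DecidableEq ι] {u : ι → α} {i j : ι}

theorem comp_swap_eq_self_of_apply_eq (h : u i = u j) : u ∘ Equiv.swap i j = u := by
  simp [Equiv.comp_swap_eq_update, h]

theorem comp_swap_apply_ne_iff (h : u i ≠ u j) (ℓ : ι) :
    u (Equiv.swap i j ℓ) ≠ u ℓ ↔ ℓ = i ∨ ℓ = j := by
  constructor
  · intro hℓ
    by_contra! hne
    exact hℓ (by rw [Equiv.swap_apply_of_ne_of_ne hne.1 hne.2])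
  · rintro (rfl | rfl) <;> simp [h, h.symm]

theorem eq_and_eq_of_comp_swap_eq [LinearOrder ι] {i' j' : ι} (hij : i < j) (hij' : i' < j')
    (h : u i ≠ u j) (heq : u ∘ Equiv.swap i j = u ∘ Equiv.swap i' j') : i = i' ∧ j = j' := by
  have h' : u i' ≠ u j' := fun h' => h <| by
    simpa using congrFun (heq.trans (comp_swap_eq_self_of_apply_eq h')) j
  have key (ℓ : ι) : ℓ = i ∨ ℓ = j ↔ ℓ = i' ∨ ℓ = j' := by
    rw [← comp_swap_apply_ne_iff h, ← comp_swap_apply_ne_iff h']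
    exact Iff.not (Eq.congr_left (congrFun heq ℓ))
  grind [key i, key j, key i', key j']

end Swap

theorem lap_eq_sum_swap {N r : ℕ} {k : Fin r → ℕ} (f : (Fin N → Fin r) → ℝ)
    {x : Fin N → Fin r} (hx : x ∈ multislice N r k) :
    lap N r k f x = ∑ e ∈ Finset.univ.filter (fun e : Fin N × Fin N => e.1 < e.2),
      (f x - f (x ∘ Equiv.swap e.1 e.2)) := by
  rw [← Finset.sum_filter_of_ne (p := fun e => x e.1 ≠ x e.2) fun e _ hne heq =>
    hne (by rw [comp_swap_eq_self_of_apply_eq heq, sub_self])]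
  rw [Finset.filter_filter]
  symm
  refine Finset.sum_nbij (fun e => x ∘ Equiv.swap e.1 e.2) ?_ ?_ ?_ fun _ _ => rfl
  · rintro ⟨i, j⟩ hij
    simp only [Finset.mem_filter, Finset.mem_univ, true_and] at hij ⊢
    refine ⟨comp_perm_mem_multislice hx _, fun heq => hij.2 ?_, i, j, hij.1.ne, rfl⟩
    simpa using congrFun heq i
  · rintro ⟨i, j⟩ hij ⟨i', j'⟩ hij' heq
    simp only [Finset.mem_coe, Finset.mem_filter, Finset.mem_univ, true_and] at hij hij'
    obtain ⟨rfl, rfl⟩ := eq_and_eq_of_comp_swap_eq hij.1 hij'.1 hij.2 heq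
    rfl
  · rintro y hy
    simp only [Finset.mem_coe, Finset.mem_filter] at hy
    obtain ⟨-, hne, i, j, hij, rfl⟩ := hy
    have hxij : x i ≠ x j := fun h => hne (comp_swap_eq_self_of_apply_eq h).symm
    rcases hij.lt_or_gt with hlt | hgt
    · exact ⟨(i, j), by simp [hlt, hxij], rfl⟩
    · exact ⟨(j, i), by simp [hgt, hxij.symm], by simp [Equiv.swap_comm]⟩

theorem lap_comp {N s r : ℕ} {k : Fin s → ℕ} (φ : Fin s → Fin r) (f : (Fin N → Fin r) → ℝ)
    {x : Fin N → Fin s} (hx : x ∈ multislice N s k) :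
    lap N s k (fun y => f (φ ∘ y)) x = lap N r (coarse φ k) f (φ ∘ x) := by
  rw [lap_eq_sum_swap _ hx, lap_eq_sum_swap _ (comp_mem_multislice_coarse φ hx)]
  rfl

theorem IsLapEigenvalue.of_coarse {N s r : ℕ} {φ : Fin s → Fin r} {k : Fin s → ℕ} {lam : ℝ}
    (h : IsLapEigenvalue N r (coarse φ k) lam) : IsLapEigenvalue N s k lam := by
  obtain ⟨f, ⟨z, hz, hfz⟩, heig⟩ := h
  obtain ⟨x, hx, rfl⟩ := exists_mem_multislice_comp_eq φ k hz
  refine ⟨fun y => f (φ ∘ y), ⟨x, hx, hfz⟩, fun y hy => ?_⟩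
  rw [lap_comp φ f hy]
  exact heig _ (comp_mem_multislice_coarse φ hy)

theorem IsLapEigenvalue.nonneg {N r : ℕ} {k : Fin r → ℕ} {lam : ℝ}
    (h : IsLapEigenvalue N r k lam) : 0 ≤ lam := by
  obtain ⟨f, ⟨x₀, hx₀, hfx₀⟩, heig⟩ := h
  obtain ⟨x, hx, hmax⟩ := (multislice N r k).exists_max_image (|f ·|) ⟨x₀, hx₀⟩
  have hfx : 0 < f x * f x := mul_self_pos.mpr <|
    abs_pos.mp ((abs_pos.mpr hfx₀).trans_le (hmax x₀ hx₀))
  -- maximum principle: at a maximiser of `|f|`, every summand of `f x * lap f x` is `≥ 0`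
  have hterm (y) (hy : y ∈ multislice N r k) : 0 ≤ f x * (f x - f y) := by
    have : f x * f y ≤ f x * f x := calc
      f x * f y ≤ |f x| * |f y| := (le_abs_self _).trans (abs_mul _ _).le
      _ ≤ |f x| * |f x| := mul_le_mul_of_nonneg_left (hmax y hy) (abs_nonneg _)
      _ = f x * f x := abs_mul_abs_self _
    linarith [mul_sub (f x) (f x) (f y)]
  have : 0 ≤ lam * (f x * f x) := calc
    0 ≤ ∑ y ∈ (multislice N r k).filter (adjacent x), f x * (f x - f y) :=
      Finset.sum_nonneg fun y hy => hterm y (Finset.mem_filter.mp hy).1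
    _ = f x * lap N r k f x := (Finset.mul_sum _ _ _).symm
    _ = lam * (f x * f x) := by rw [heig x hx]; ring
  exact nonneg_of_mul_nonneg_left this hfx

theorem eigenvalue_of_coarsening_general (N s r : ℕ)
    (φ : Fin s → Fin r) (k : Fin s → ℕ)
    (hne : {lam : ℝ | lam ≠ 0 ∧ IsLapEigenvalue N r (coarse φ k) lam}.Nonempty) :
    (∀ lam : ℝ, IsLapEigenvalue N r (coarse φ k) lam → IsLapEigenvalue N s k lam) ∧
    sInf {lam : ℝ | lam ≠ 0 ∧ IsLapEigenvalue N s k lam}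
      ≤ sInf {lam : ℝ | lam ≠ 0 ∧ IsLapEigenvalue N r (coarse φ k) lam} :=
  ⟨fun _ => IsLapEigenvalue.of_coarse,
    csInf_le_csInf ⟨0, fun _ hlam => hlam.2.nonneg⟩ hne fun _ hlam => ⟨hlam.1, hlam.2.of_coarse⟩⟩

/-- Every eigenvalue of the Laplacian of a coarsening `V_{N,φ(k)}` is an
eigenvalue of the Laplacian of `V_{N,k}`; in particular the spectral gap (the
least nonzero eigenvalue) of the coarser multislice is at least that of the
finer one. -/
theorem eigenvalue_of_coarsening (N s r : ℕ) (hr : 2 ≤ r) (hs : r < s)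
    (φ : Fin s → Fin r) (hφ : Function.Surjective φ) (k : Fin s → ℕ)
    (hk : ∑ n, k n = N)
    (hne : {lam : ℝ | lam ≠ 0 ∧ IsLapEigenvalue N r (coarse φ k) lam}.Nonempty) :
    (∀ lam : ℝ, IsLapEigenvalue N r (coarse φ k) lam → IsLapEigenvalue N s k lam) ∧
    sInf {lam : ℝ | lam ≠ 0 ∧ IsLapEigenvalue N s k lam}
      ≤ sInf {lam : ℝ | lam ≠ 0 ∧ IsLapEigenvalue N r (coarse φ k) lam} :=
  eigenvalue_of_coarsening_general N s r φ k hne
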